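/- arXiv:1902.08611 — 2 statements merged into one kernel-verified Lean document; each statement's English description precedes it below -/
import Mathlib

section
/- If L is a projective R-module, then for all R-modules M and N the natural map τ : L ⊗_R Hom_R(M, N) → Hom_R(Hom_R(L, M), N), given by x ⊗ u ↦ (v ↦ u(v(x))), is injective. -/
open TensorProduct

universe u

/-- The natural map `τ : L ⊗[R] Hom_R(M, N) → Hom_R(Hom_R(L, M), N)`,
`x ⊗ u ↦ (v ↦ u (v x))`. -/
noncomputable def tau (R : Type u) [CommRing R] (L M N : Type u) [AddCommGroup L] [Module R L]
    [AddCommGroup M] [Module R M] [AddCommGroup N] [Module R N] :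
    (L ⊗[R] (M →ₗ[R] N)) →ₗ[R] ((L →ₗ[R] M) →ₗ[R] N) :=
  TensorProduct.lift <| LinearMap.mk₂ R
    (fun x u => u ∘ₗ (LinearMap.applyₗ x : (L →ₗ[R] M) →ₗ[R] M))
    (fun x y u => by ext v; simp)
    (fun c x u => by ext v; simp)
    (fun x u u' => by ext v; simp)
    (fun c x u => by ext v; simp)

lemma tau_naturality {R : Type u} [CommRing R] {L L' M N : Type u}
    [AddCommGroup L] [Module R L] [AddCommGroup L'] [Module R L']
    [AddCommGroup M] [Module R M] [AddCommGroup N] [Module R N]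
    (s : L →ₗ[R] L') (t : L ⊗[R] (M →ₗ[R] N)) (w : L' →ₗ[R] M) :
    tau R L' M N (LinearMap.rTensor _ s t) w = tau R L M N t (w ∘ₗ s) := by
  induction t using TensorProduct.induction_on with
  | zero => simp
  | tmul x u => simp [tau]
  | add a b ha hb => simp [ha, hb]

lemma tau_free_eval {R : Type u} [CommRing R] {ι M N : Type u}
    [AddCommGroup M] [Module R M] [AddCommGroup N] [Module R N]
    [DecidableEq ι] (t : (ι →₀ R) ⊗[R] (M →ₗ[R] N)) (i : ι) (m : M) :
    tau R (ι →₀ R) M N t (LinearMap.toSpanSingleton R M m ∘ₗ Finsupp.lapply i) =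
      (TensorProduct.finsuppScalarLeft R (M →ₗ[R] N) ι t) i m := by
  induction t using TensorProduct.induction_on with
  | zero => simp
  | tmul g u => simp [tau]
  | add a b ha hb => simp [ha, hb]

theorem stmt3 (R : Type u) [CommRing R] (L M N : Type u) [AddCommGroup L] [Module R L]
    [AddCommGroup M] [Module R M] [AddCommGroup N] [Module R N]
    (hL : Module.Projective R L) :
    Function.Injective (tau R L M N) := by
  classical
  obtain ⟨s, hs⟩ := hL.out
  rw [injective_iff_map_eq_zero]
  intro t ht
  have hsinj : Function.Injective (LinearMap.rTensor (M →ₗ[R] N) s) := by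
    apply Function.LeftInverse.injective (g := LinearMap.rTensor (M →ₗ[R] N)
      (Finsupp.linearCombination R id))
    intro x
    rw [← LinearMap.rTensor_comp_apply]
    have : (Finsupp.linearCombination R (id : L → L)) ∘ₗ s = LinearMap.id :=
      LinearMap.ext fun y => hs y
    rw [this, LinearMap.rTensor_id, LinearMap.id_apply]
  apply hsinj
  rw [map_zero]
  have h0 : TensorProduct.finsuppScalarLeft R (M →ₗ[R] N) L
      (LinearMap.rTensor (M →ₗ[R] N) s t) = 0 := by
    ext i m
    rw [← tau_free_eval, tau_naturality, ht]
    simp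
  exact (LinearEquiv.map_eq_zero_iff _).mp h0
end

section
/- Let h : R → S be a ring homomorphism. The scalar extension functor S ⊗_R − is naturally isomorphic (as functors to S-modules) to the scalar coextension functor Hom_R(S, −) if and only if S is finitely generated projective as an R-module and Hom_R(S, R) ≅ S as S-modules. -/
open CategoryTheory

universe u

open TensorProduct

namespace Stmt17Aux
variable (R S : Type u) [CommRing R] [CommRing S] [Algebra R S]
noncomputable abbrev Sres : ModuleCat.{u} R :=
  (ModuleCat.restrictScalars (algebraMap R S)).obj (ModuleCat.of S S)
def toS (s : Sres R S) : S := s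
lemma smul_res (r : R) (s : Sres R S) : toS R S (r • s) = r • toS R S s := by
  show algebraMap R S r • toS R S s = r • toS R S s
  rw [smul_eq_mul, ← Algebra.smul_def]
noncomputable def resEquiv : (Sres R S : Type u) ≃ₗ[R] S :=
  AddEquiv.toLinearEquiv (AddEquiv.refl S) (smul_res R S)
@[simp] lemma resEquiv_apply (s : Sres R S) : resEquiv R S s = s := rfl
@[simp] lemma resEquiv_symm_apply (s : S) : (resEquiv R S).symm s = s := rfl
end Stmt17Aux

namespace Stmt17Aux
variable {R S : Type u} [CommRing R] [CommRing S] [Algebra R S]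

lemma proj_fin_of_dualBasis {ι : Type u} [Fintype ι] (x : ι → S) (g : ι → (S →ₗ[R] R))
    (h : ∀ y : S, ∑ i, g i y • x i = y) :
    Module.Projective R S ∧ Module.Finite R S := by
  classical
  let p : (ι → R) →ₗ[R] S := Fintype.linearCombination R x
  let q : S →ₗ[R] (ι → R) := LinearMap.pi (fun i => g i)
  have hpq : p.comp q = LinearMap.id := by
    ext y
    simp [p, q, Fintype.linearCombination_apply, h]
  have hsurj : Function.Surjective p := fun y =>
    ⟨q y, by rw [← LinearMap.comp_apply, hpq]; rfl⟩
  exact ⟨Module.Projective.of_split q p hpq, Module.Finite.of_surjective p hsurj⟩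

lemma exists_dualBasis [Module.Projective R S] [Module.Finite R S] :
    ∃ (n : ℕ) (x : Fin n → S) (g : Fin n → (S →ₗ[R] R)),
      ∀ y : S, ∑ i, g i y • x i = y := by
  obtain ⟨n, p, q, -, -, hpq⟩ := Module.Finite.exists_comp_eq_id_of_projective R S
  refine ⟨n, fun i => p (Pi.single i 1), fun i => (LinearMap.proj i).comp q, fun y => ?_⟩
  have h1 : ∀ i, (q y i) • p (Pi.single i (1 : R)) = p (Pi.single i (q y i)) := by
    intro i
    rw [← map_smul, ← Pi.single_smul, smul_eq_mul, mul_one]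
  calc ∑ i, ((LinearMap.proj i).comp q) y • p (Pi.single i (1:R))
      = ∑ i, p (Pi.single i (q y i)) := by simp only [LinearMap.comp_apply, LinearMap.proj_apply, h1]
    _ = p (∑ i, Pi.single i (q y i)) := by rw [map_sum]
    _ = p (q y) := by rw [Finset.univ_sum_single]
    _ = y := by rw [← LinearMap.comp_apply, hpq]; rfl

end Stmt17Aux

namespace Stmt17Aux
open ChangeOfRings
variable {R S : Type u} [CommRing R] [CommRing S] [Algebra R S]

def ofS (s : S) : Sres R S := s

lemma smul_ofS (r : R) (s : S) : r • ofS (R := R) s = ofS (r • s) := by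
  show (algebraMap R S r • s : S) = _
  rw [smul_eq_mul, ← Algebra.smul_def]; rfl

section eta
variable (e : (S →ₗ[R] R) ≃ₗ[R] S)

lemma symm_mul (he : ∀ (s : S) (u : S →ₗ[R] R), e (u ∘ₗ LinearMap.mulLeft R s) = s * e u)
    (s t : S) : e.symm (s * t) = (e.symm t) ∘ₗ LinearMap.mulLeft R s := by
  apply e.injective
  rw [he, e.apply_symm_apply, e.apply_symm_apply]

lemma symm_mul_apply (he : ∀ (s : S) (u : S →ₗ[R] R), e (u ∘ₗ LinearMap.mulLeft R s) = s * e u)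
    (s t x : S) : e.symm (s * t) x = e.symm t (s * x) := by
  rw [symm_mul e he]; rfl

variable (M : ModuleCat.{u} R)

noncomputable def etaAux : (Sres R S : Type u) →ₗ[R] M →ₗ[R] ((Sres R S : Type u) →ₗ[R] M) :=
  LinearMap.mk₂ R
    (fun s m => ((e.symm (resEquiv R S s)) ∘ₗ (resEquiv R S).toLinearMap).smulRight m)
    (fun s s' m => by
      ext x
      simp only [LinearMap.smulRight_apply, LinearMap.comp_apply, LinearEquiv.coe_coe,
        map_add, LinearMap.add_apply, add_smul])
    (fun r s m => by
      ext x
      simp only [LinearMap.smulRight_apply, LinearMap.comp_apply, LinearEquiv.coe_coe,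
        map_smul, LinearMap.smul_apply, smul_assoc])
    (fun s m m' => by
      ext x
      simp only [LinearMap.smulRight_apply, LinearMap.comp_apply, LinearEquiv.coe_coe,
        LinearMap.add_apply, smul_add])
    (fun r s m => by
      ext x
      simp only [LinearMap.smulRight_apply, LinearMap.comp_apply, LinearEquiv.coe_coe,
        LinearMap.smul_apply]
      rw [smul_comm])

noncomputable def etaLin : TensorProduct R (Sres R S : Type u) M →ₗ[R]
    ((Sres R S : Type u) →ₗ[R] M) :=
  TensorProduct.lift (etaAux e M)

@[simp] lemma etaLin_tmul (s : Sres R S) (m : M) (x : Sres R S) :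
    etaLin e M (s ⊗ₜ[R] m) x = (e.symm (resEquiv R S s)) (resEquiv R S x) • m := rfl

end eta
end Stmt17Aux

namespace Stmt17Aux
open ChangeOfRings
variable {R S : Type u} [CommRing R] [CommRing S] [Algebra R S]
variable (e : (S →ₗ[R] R) ≃ₗ[R] S)

noncomputable def eta (he : ∀ (s : S) (u : S →ₗ[R] R),
      e (u ∘ₗ LinearMap.mulLeft R s) = s * e u) (M : ModuleCat.{u} R) :
    (ModuleCat.extendScalars (algebraMap R S)).obj M ⟶
      (ModuleCat.coextendScalars (algebraMap R S)).obj M := ModuleCat.ofHom (X := ((ModuleCat.extendScalars (algebraMap R S)).obj M : Type u))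
    (Y := ((ModuleCat.coextendScalars (algebraMap R S)).obj M : Type u)) {
  toFun := etaLin e M
  map_add' := map_add _
  map_smul' := fun c t => by
    dsimp only [RingHom.id_apply]
    induction t using TensorProduct.induction_on with
    | zero =>
      have h0 : (c • (0 : ((ModuleCat.extendScalars (algebraMap R S)).obj M : Type u))) = 0 :=
        smul_zero c
      erw [h0, map_zero]; exact LinearMap.ext fun x => rfl
    | tmul s m =>
      erw [ModuleCat.ExtendScalars.smul_tmul]
      apply LinearMap.ext; intro x
      show (e.symm (c * toS R S s)) (toS R S x) • m
          = (e.symm (toS R S s)) (toS R S x * c) • m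
      rw [symm_mul_apply e he, mul_comm c (toS R S x)]
    | add a b ha hb => erw [smul_add, map_add, map_add, smul_add, ha, hb]; rfl }

end Stmt17Aux

namespace Stmt17Aux
open ChangeOfRings
variable {R S : Type u} [CommRing R] [CommRing S] [Algebra R S]
variable (e : (S →ₗ[R] R) ≃ₗ[R] S)

section zeta
variable {n : ℕ} (xb : Fin n → S) (gd : Fin n → (S →ₗ[R] R))

lemma dual2 (hd : ∀ y : S, ∑ i, gd i y • xb i = y) (u : S →ₗ[R] R) :
    ∑ i, u (xb i) • gd i = u := by
  ext y
  rw [LinearMap.sum_apply]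
  conv_rhs => rw [← hd y, map_sum]
  refine Finset.sum_congr rfl fun i _ => ?_
  rw [LinearMap.smul_apply, map_smul, smul_eq_mul, smul_eq_mul, mul_comm]

variable (M : ModuleCat.{u} R)

noncomputable def zeta (g : (Sres R S : Type u) →ₗ[R] M) :
    TensorProduct R (Sres R S : Type u) M :=
  ∑ i, ((resEquiv R S).symm (e (gd i))) ⊗ₜ[R] g ((resEquiv R S).symm (xb i))

lemma zeta_etaLin (hd : ∀ y : S, ∑ i, gd i y • xb i = y)
    (t : TensorProduct R (Sres R S : Type u) M) :
    zeta e xb gd M (etaLin e M t) = t := by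
  induction t using TensorProduct.induction_on with
  | zero => simp only [zeta, map_zero]; exact Finset.sum_eq_zero fun i _ => by rw [LinearMap.zero_apply, TensorProduct.tmul_zero]
  | tmul s m =>
    unfold zeta
    have h1 : ∀ i : Fin n,
        ((resEquiv R S).symm (e (gd i))) ⊗ₜ[R] ((etaLin e M (s ⊗ₜ[R] m)) ((resEquiv R S).symm (xb i)))
          = ((e.symm (resEquiv R S s)) (xb i) • (resEquiv R S).symm (e (gd i))) ⊗ₜ[R] m := by
      intro i
      rw [etaLin_tmul, smul_tmul, LinearEquiv.apply_symm_apply]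
    rw [Finset.sum_congr rfl fun i _ => h1 i, ← TensorProduct.sum_tmul]
    have h2 : (∑ i, (e.symm (resEquiv R S s)) (xb i) • (resEquiv R S).symm (e (gd i)))
        = (resEquiv R S).symm (e (∑ i, (e.symm (resEquiv R S s)) (xb i) • gd i)) := by
      rw [map_sum, map_sum]
      exact Finset.sum_congr rfl fun i _ => by rw [map_smul, map_smul]
    rw [h2, dual2 xb gd hd, e.apply_symm_apply, LinearEquiv.symm_apply_apply]
  | add a b ha hb =>
    rw [map_add]
    have : ∀ (g g' : (Sres R S : Type u) →ₗ[R] M), zeta e xb gd M (g + g') =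
        zeta e xb gd M g + zeta e xb gd M g' := by
      intro g g'
      unfold zeta
      rw [← Finset.sum_add_distrib]
      exact Finset.sum_congr rfl fun i _ => by rw [LinearMap.add_apply, TensorProduct.tmul_add]
    rw [this, ha, hb]

lemma etaLin_zeta (hd : ∀ y : S, ∑ i, gd i y • xb i = y)
    (g : (Sres R S : Type u) →ₗ[R] M) :
    etaLin e M (zeta e xb gd M g) = g := by
  apply LinearMap.ext; intro x
  unfold zeta
  rw [map_sum, LinearMap.sum_apply]
  have h1 : ∀ i : Fin n,
      (etaLin e M (((resEquiv R S).symm (e (gd i))) ⊗ₜ[R] g ((resEquiv R S).symm (xb i)))) x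
      = g (gd i (resEquiv R S x) • (resEquiv R S).symm (xb i)) := by
    intro i
    rw [etaLin_tmul, LinearEquiv.apply_symm_apply, e.symm_apply_apply, ← map_smul]
  rw [Finset.sum_congr rfl fun i _ => h1 i, ← map_sum]
  congr 1
  have h2 : (∑ i, gd i (resEquiv R S x) • (resEquiv R S).symm (xb i))
      = (resEquiv R S).symm (∑ i, gd i (resEquiv R S x) • xb i) := by
    rw [map_sum]
    exact Finset.sum_congr rfl fun i _ => (map_smul _ _ _).symm
  rw [h2, hd, LinearEquiv.symm_apply_apply]

end zeta
end Stmt17Aux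

namespace Stmt17Aux
open ChangeOfRings
variable {R S : Type u} [CommRing R] [CommRing S] [Algebra R S]

noncomputable def natIso (e : (S →ₗ[R] R) ≃ₗ[R] S)
    (he : ∀ (s : S) (u : S →ₗ[R] R), e (u ∘ₗ LinearMap.mulLeft R s) = s * e u)
    {n : ℕ} (xb : Fin n → S) (gd : Fin n → (S →ₗ[R] R))
    (hd : ∀ y : S, ∑ i, gd i y • xb i = y) :
    (ModuleCat.extendScalars (algebraMap R S) :
        ModuleCat.{u} R ⥤ ModuleCat.{u} S) ≅ ModuleCat.coextendScalars (algebraMap R S) :=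
  NatIso.ofComponents
    (fun M => LinearEquiv.toModuleIso
      (LinearEquiv.ofBijective (eta e he M).hom
        ⟨Function.LeftInverse.injective (g := zeta e xb gd M) (fun t => zeta_etaLin e xb gd M hd t),
         Function.RightInverse.surjective (g := zeta e xb gd M) (fun t => etaLin_zeta e xb gd M hd t)⟩))
    (fun {M N} φ => by
      apply ModuleCat.hom_ext; apply LinearMap.ext; intro t
      show eta e he N (((ModuleCat.extendScalars (algebraMap R S)).map φ) t)
          = ((ModuleCat.coextendScalars (algebraMap R S)).map φ) (eta e he M t)
      induction t using TensorProduct.induction_on with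
      | zero => erw [map_zero, map_zero]
      | tmul s m =>
        apply LinearMap.ext; intro x
        show (etaLin e N (s ⊗ₜ[R] (φ m))) x = φ ((etaLin e M (s ⊗ₜ[R] m)) x)
        rw [etaLin_tmul, etaLin_tmul, map_smul]
      | add a b ha hb => erw [map_add, map_add, map_add, map_add, ha, hb])

end Stmt17Aux

namespace Stmt17Aux
open ChangeOfRings
variable {R S : Type u} [CommRing R] [CommRing S] [Algebra R S]

section forward
variable (α : (ModuleCat.extendScalars (algebraMap R S) :
    ModuleCat.{u} R ⥤ ModuleCat.{u} S) ≅ ModuleCat.coextendScalars (algebraMap R S))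

/-- The identity as an element of the coextension of scalars of `Sres`. -/
noncomputable def idS : ((ModuleCat.coextendScalars (algebraMap R S)).obj (Sres R S) : Type u) :=
  (LinearMap.id : (Sres R S : Type u) →ₗ[R] (Sres R S : Type u))

/-- Formula: α.inv is determined by its value on the identity. -/
lemma star {M : ModuleCat.{u} R} (φ : Sres R S ⟶ M) :
    α.inv.app M (φ.hom : (Sres R S : Type u) →ₗ[R] M) =
      ((ModuleCat.extendScalars (algebraMap R S)).map φ) (α.inv.app (Sres R S) (idS (R := R) (S := S))) := by
  have h := LinearMap.congr_fun (congrArg ModuleCat.Hom.hom (α.inv.naturality φ)) (idS (R := R) (S := S))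
  have h2 : ((ModuleCat.coextendScalars (algebraMap R S)).map φ) (idS (R := R) (S := S))
      = (φ.hom : (Sres R S : Type u) →ₗ[R] M) := by
    apply LinearMap.ext; intro x; rfl
  rw [← h2]
  exact h

end forward
end Stmt17Aux

namespace Stmt17Aux
open ChangeOfRings
variable {R S : Type u} [CommRing R] [CommRing S] [Algebra R S]

section forward
variable (α : (ModuleCat.extendScalars (algebraMap R S) :
      ModuleCat.{u} R ⥤ ModuleCat.{u} S) ≅ ModuleCat.coextendScalars (algebraMap R S))

/-- The functional attached to a pair, via `α.hom` at `R`. -/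
noncomputable def qdef (p : Prod (Sres R S : Type u) (Sres R S : Type u)) :
    (Sres R S : Type u) →ₗ[R] R :=
  α.hom.app (ModuleCat.of R R) (p.1 ⊗ₜ[R] (1 : R))

include α in
lemma forward_dualBasis :
    ∃ (ι : Type u) (_ : Fintype ι) (x : ι → S) (g : ι → (S →ₗ[R] R)),
      ∀ y : S, ∑ i, g i y • x i = y := by
  classical
  set T : ((ModuleCat.extendScalars (algebraMap R S)).obj (Sres R S) : Type u) :=
    α.inv.app (Sres R S) (idS (R := R) (S := S)) with hT
  obtain ⟨t, ht⟩ := TensorProduct.exists_finset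
    (T : TensorProduct R ((ModuleCat.restrictScalars (algebraMap R S)).obj
      (ModuleCat.of S S) : Type u) (Sres R S : Type u))
  have key1 : ∀ p ∈ t, (α.hom.app (Sres R S) (p.1 ⊗ₜ[R] p.2) :
      (Sres R S : Type u) →ₗ[R] (Sres R S : Type u)) =
      (LinearMap.toSpanSingleton R (Sres R S : Type u) p.2).comp (qdef α p) := by
    intro p _
    set φp : ModuleCat.of R R ⟶ Sres R S :=
      ModuleCat.ofHom (Y := Sres R S) (LinearMap.toSpanSingleton R (Sres R S : Type u) p.2) with hφp
    have hnat := LinearMap.congr_fun (congrArg ModuleCat.Hom.hom (α.hom.naturality φp)) (p.1 ⊗ₜ[R] (1 : R))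
    have hnat' : α.hom.app (Sres R S)
        (((ModuleCat.extendScalars (algebraMap R S)).map φp) (p.1 ⊗ₜ[R] (1 : R)))
        = ((ModuleCat.coextendScalars (algebraMap R S)).map φp) (qdef α p) := hnat
    have h1 : ((ModuleCat.extendScalars (algebraMap R S)).map φp)
        (p.1 ⊗ₜ[R] (1 : R)) = p.1 ⊗ₜ[R] p.2 := by
      show (p.1 ⊗ₜ[R] (φp (1 : R)) : TensorProduct R (Sres R S : Type u) (Sres R S : Type u)) = p.1 ⊗ₜ[R] p.2
      congr 1
      show (1 : R) • p.2 = p.2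
      exact one_smul R p.2
    rw [h1] at hnat'
    rw [hnat']
    rfl
  have key2 : ∀ x : (Sres R S : Type u),
      x = ∑ p ∈ t, ((qdef α p) x) • p.2 := by
    intro x
    have hTid : α.hom.app (Sres R S) T = idS (R := R) (S := S) :=
      LinearMap.congr_fun (congrArg ModuleCat.Hom.hom (α.inv_hom_id_app (Sres R S))) (idS (R := R) (S := S))
    have hsum : α.hom.app (Sres R S) T
        = ∑ p ∈ t, α.hom.app (Sres R S) (p.1 ⊗ₜ[R] p.2) := by
      conv_lhs => rw [show T = _ from ht]
      exact map_sum (α.hom.app (Sres R S)).hom _ _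
    calc x = (∑ p ∈ t, (α.hom.app (Sres R S) (p.1 ⊗ₜ[R] p.2) :
            (Sres R S : Type u) →ₗ[R] (Sres R S : Type u))) x :=
          (LinearMap.congr_fun (hsum.symm.trans hTid) x).symm
      _ = ∑ p ∈ t, (α.hom.app (Sres R S) (p.1 ⊗ₜ[R] p.2) :
            (Sres R S : Type u) →ₗ[R] (Sres R S : Type u)) x :=
          LinearMap.sum_apply t _ x
      _ = ∑ p ∈ t, ((qdef α p) x) • p.2 :=
          Finset.sum_congr rfl fun p hp => by rw [key1 p hp]; rfl
  refine ⟨{p // p ∈ t}, inferInstance,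
    fun i => resEquiv R S i.1.2,
    fun i => (qdef α i.1).comp (resEquiv R S).symm.toLinearMap, fun y => ?_⟩
  calc ∑ i : {p // p ∈ t},
        ((qdef α i.1).comp (resEquiv R S).symm.toLinearMap) y • resEquiv R S i.1.2
      = ∑ p ∈ t, (qdef α p) ((resEquiv R S).symm y) • resEquiv R S p.2 :=
        Finset.sum_coe_sort t
          (fun p => (qdef α p) ((resEquiv R S).symm y) • resEquiv R S p.2)
    _ = resEquiv R S (∑ p ∈ t, (qdef α p) ((resEquiv R S).symm y) • p.2) := by
        rw [map_sum]
        exact Finset.sum_congr rfl fun p _ => (map_smul _ _ _).symm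
    _ = resEquiv R S ((resEquiv R S).symm y) :=
        (congrArg (resEquiv R S) (key2 ((resEquiv R S).symm y))).symm
    _ = y := (resEquiv R S).apply_symm_apply y

end forward
end Stmt17Aux

namespace Stmt17Aux
open ChangeOfRings
variable {R S : Type u} [CommRing R] [CommRing S] [Algebra R S]

section forwardE
variable (α : (ModuleCat.extendScalars (algebraMap R S) :
      ModuleCat.{u} R ⥤ ModuleCat.{u} S) ≅ ModuleCat.coextendScalars (algebraMap R S))

noncomputable def muLin : TensorProduct R (Sres R S : Type u) R →ₗ[R] S :=
  (resEquiv R S).toLinearMap ∘ₗ (TensorProduct.rid R (Sres R S : Type u)).toLinearMap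

lemma muLin_tmul (x : Sres R S) (r : R) :
    muLin (x ⊗ₜ[R] r) = r • (resEquiv R S x) := by
  show resEquiv R S (TensorProduct.rid R (Sres R S : Type u) (x ⊗ₜ[R] r)) = _
  rw [TensorProduct.rid_tmul, map_smul]

lemma muLin_smul (c : S) (t : ((ModuleCat.extendScalars (algebraMap R S)).obj (ModuleCat.of R R) : Type u)) :
    muLin ((c • t : ((ModuleCat.extendScalars (algebraMap R S)).obj (ModuleCat.of R R) : Type u)))
      = c * muLin t := by
  induction t using TensorProduct.induction_on with
  | zero =>
    have h0 : (c • (0 : ((ModuleCat.extendScalars (algebraMap R S)).obj (ModuleCat.of R R) : Type u))) = 0 :=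
      smul_zero c
    erw [h0, map_zero, mul_zero]
  | tmul x r =>
    erw [ModuleCat.ExtendScalars.smul_tmul, muLin_tmul, muLin_tmul]
    show r • (c * resEquiv R S x) = c * (r • resEquiv R S x)
    rw [mul_smul_comm]
  | add a b ha hb => erw [smul_add, map_add, map_add, mul_add, ha, hb]

/-- Identity inclusion of a linear map into the coextension-of-scalars module. -/
def asCo (M : ModuleCat.{u} R) (g : (Sres R S : Type u) →ₗ[R] M) :
    ((ModuleCat.coextendScalars (algebraMap R S)).obj M : Type u) := g

lemma coext_smul_bridge (M : ModuleCat.{u} R) (r : R)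
    (g : (Sres R S : Type u) →ₗ[R] M) :
    (r • g : (Sres R S : Type u) →ₗ[R] M) = (algebraMap R S r) • asCo M g := by
  apply LinearMap.ext; intro x
  have h : (resEquiv R S).symm ((resEquiv R S x) * algebraMap R S r) = r • x := by
    apply (resEquiv R S).injective
    rw [LinearEquiv.apply_symm_apply, map_smul, mul_comm, ← Algebra.smul_def]
  calc (r • g) x = r • g x := rfl
    _ = g (r • x) := (map_smul g r x).symm
    _ = g ((resEquiv R S).symm ((resEquiv R S x) * algebraMap R S r)) := by rw [h]
    _ = ((algebraMap R S r) • asCo M g) x := rfl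

lemma rid_one (tt : TensorProduct R (Sres R S : Type u) R) :
    ((resEquiv R S).symm (muLin tt)) ⊗ₜ[R] (1 : R) = tt := by
  induction tt using TensorProduct.induction_on with
  | zero => rw [map_zero, map_zero, TensorProduct.zero_tmul]
  | tmul x r =>
    rw [muLin_tmul, map_smul, LinearEquiv.symm_apply_apply, TensorProduct.smul_tmul,
      smul_eq_mul, mul_one]
  | add a b ha hb =>
    rw [map_add, map_add, TensorProduct.add_tmul, ha, hb]

include α in
lemma forward_e : ∃ e : (S →ₗ[R] R) ≃ₗ[R] S,
    ∀ (s : S) (u : S →ₗ[R] R), e (u ∘ₗ LinearMap.mulLeft R s) = s * e u := by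
  classical
  set R₀ := ModuleCat.of R R with hR₀
  refine ⟨⟨⟨⟨fun u => muLin (α.inv.app R₀ (asCo R₀ (u ∘ₗ (resEquiv R S).toLinearMap))), ?_⟩, ?_⟩,
    fun s => (α.hom.app R₀ (((resEquiv R S).symm s) ⊗ₜ[R] (1 : R))
      : (Sres R S : Type u) →ₗ[R] R) ∘ₗ (resEquiv R S).symm.toLinearMap, ?_, ?_⟩, ?_⟩
  · intro u v
    show muLin (α.inv.app R₀ (asCo R₀ ((u + v) ∘ₗ (resEquiv R S).toLinearMap))) = _
    have : asCo R₀ ((u + v) ∘ₗ (resEquiv R S).toLinearMap)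
        = asCo R₀ (u ∘ₗ (resEquiv R S).toLinearMap)
          + asCo R₀ (v ∘ₗ (resEquiv R S).toLinearMap) := by
      show (u + v) ∘ₗ (resEquiv R S).toLinearMap = _
      rw [LinearMap.add_comp]; rfl
    rw [this, map_add]; exact map_add muLin _ _
  · intro r u
    show muLin (α.inv.app R₀ (asCo R₀ ((r • u) ∘ₗ (resEquiv R S).toLinearMap))) = _
    have : asCo R₀ ((r • u) ∘ₗ (resEquiv R S).toLinearMap)
        = (algebraMap R S r) • asCo R₀ (u ∘ₗ (resEquiv R S).toLinearMap) := by
      show (r • u) ∘ₗ (resEquiv R S).toLinearMap = _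
      rw [LinearMap.smul_comp]
      exact coext_smul_bridge R₀ r _
    rw [this, map_smul, muLin_smul, ← Algebra.smul_def]
    rfl
  · intro u
    show (α.hom.app R₀ (((resEquiv R S).symm
        (muLin (α.inv.app R₀ (asCo R₀ (u ∘ₗ (resEquiv R S).toLinearMap))))) ⊗ₜ[R] (1 : R))
      : (Sres R S : Type u) →ₗ[R] R) ∘ₗ (resEquiv R S).symm.toLinearMap = u
    erw [rid_one]
    have h2 : α.hom.app R₀ (α.inv.app R₀ (asCo R₀ (u ∘ₗ (resEquiv R S).toLinearMap)))
        = asCo R₀ (u ∘ₗ (resEquiv R S).toLinearMap) :=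
      LinearMap.congr_fun (congrArg ModuleCat.Hom.hom (α.inv_hom_id_app R₀)) (asCo R₀ (u ∘ₗ (resEquiv R S).toLinearMap))
    rw [h2]
    apply LinearMap.ext; intro y
    show u (resEquiv R S ((resEquiv R S).symm y)) = u y
    rw [LinearEquiv.apply_symm_apply]
  · intro s
    have h3 : asCo R₀ (((α.hom.app R₀ (((resEquiv R S).symm s) ⊗ₜ[R] (1 : R))
        : (Sres R S : Type u) →ₗ[R] R) ∘ₗ (resEquiv R S).symm.toLinearMap)
          ∘ₗ (resEquiv R S).toLinearMap)
        = α.hom.app R₀ (((resEquiv R S).symm s) ⊗ₜ[R] (1 : R)) := by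
      show (((α.hom.app R₀ (((resEquiv R S).symm s) ⊗ₜ[R] (1 : R))
        : (Sres R S : Type u) →ₗ[R] R) ∘ₗ (resEquiv R S).symm.toLinearMap)
          ∘ₗ (resEquiv R S).toLinearMap) = _
      apply LinearMap.ext; intro x
      show (α.hom.app R₀ (((resEquiv R S).symm s) ⊗ₜ[R] (1 : R))
        : (Sres R S : Type u) →ₗ[R] R) ((resEquiv R S).symm (resEquiv R S x)) = _
      rw [LinearEquiv.symm_apply_apply]
      rfl
    dsimp only
    rw [h3]
    have h4 : α.inv.app R₀ (α.hom.app R₀ (((resEquiv R S).symm s) ⊗ₜ[R] (1 : R)))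
        = ((resEquiv R S).symm s) ⊗ₜ[R] (1 : R) :=
      LinearMap.congr_fun (congrArg ModuleCat.Hom.hom (α.hom_inv_id_app R₀)) (((resEquiv R S).symm s) ⊗ₜ[R] (1 : R))
    rw [h4, muLin_tmul, one_smul, LinearEquiv.apply_symm_apply]
  · intro s u
    have h1 : asCo R₀ ((u ∘ₗ LinearMap.mulLeft R s) ∘ₗ (resEquiv R S).toLinearMap)
        = s • asCo R₀ (u ∘ₗ (resEquiv R S).toLinearMap) := by
      show (u ∘ₗ LinearMap.mulLeft R s) ∘ₗ (resEquiv R S).toLinearMap = _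
      apply LinearMap.ext; intro x
      show u (s * resEquiv R S x)
          = u (resEquiv R S ((resEquiv R S).symm ((resEquiv R S x) * s)))
      rw [LinearEquiv.apply_symm_apply, mul_comm]
    have h5 := map_smul (α.inv.app R₀).hom s (asCo R₀ (u ∘ₗ (resEquiv R S).toLinearMap))
    show muLin (α.inv.app R₀
      (asCo R₀ ((u ∘ₗ LinearMap.mulLeft R s) ∘ₗ (resEquiv R S).toLinearMap))) = _
    rw [h1]
    exact (congrArg muLin h5).trans (muLin_smul s _)

end forwardE
end Stmt17Aux

/-- Scalar extension `S ⊗_R −` is naturally isomorphic to scalar coextension `Hom_R(S, −)`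
(as functors to `S`-modules) iff `S` is a finitely generated projective `R`-module and
`Hom_R(S, R) ≅ S` as `S`-modules (where `S` acts on `Hom_R(S, R)` by precomposition with
multiplication). -/
theorem stmt17 (R : Type u) [CommRing R] (S : Type u) [CommRing S] [Algebra R S] :
    Nonempty ((ModuleCat.extendScalars (algebraMap R S) :
        ModuleCat.{u} R ⥤ ModuleCat.{u} S) ≅ ModuleCat.coextendScalars (algebraMap R S)) ↔
      (Module.Projective R S ∧ Module.Finite R S ∧
        ∃ e : (S →ₗ[R] R) ≃ₗ[R] S,
          ∀ (s : S) (u : S →ₗ[R] R), e (u ∘ₗ LinearMap.mulLeft R s) = s * e u) := by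
  constructor
  · rintro ⟨α⟩
    obtain ⟨ι, hfin, x, g, hd⟩ := Stmt17Aux.forward_dualBasis α
    obtain ⟨hproj, hfinite⟩ := @Stmt17Aux.proj_fin_of_dualBasis R S _ _ _ ι hfin x g hd
    obtain ⟨e, he⟩ := Stmt17Aux.forward_e α
    exact ⟨hproj, hfinite, e, he⟩
  · rintro ⟨hproj, hfin, e, he⟩
    obtain ⟨n, xb, gd, hd⟩ := Stmt17Aux.exists_dualBasis (R := R) (S := S)
    exact ⟨Stmt17Aux.natIso e he xb gd hd⟩
end
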